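/- (Theorem 5.4, a priori error bound with respect to the ℓ∞-optimal solution.) Let x be a space-time function with r̄(x) = 0, and let x̃ ∈ S satisfy ‖W̄ r̄(x̃)‖₂ ≤ ‖W̄ r̄(w)‖₂ for all w ∈ S. Assume: (i) there exists s_A > 0 with ‖A_LM z‖₂ ≥ s_A ‖z‖₂ for all z ∈ ℝ^{N·N_t}; (ii) Δt · L_f · σ_max(B_LM) < s_A; and (iii) there exists P > 0 with ‖W̄ r̄(w)‖₂ ≥ P · ‖r̄(w)‖₂ for all w ∈ S. Then for every w ∈ S, max_{n ∈ Fin N_t} ‖x(n) − x̃(n)‖₂ ≤ (√N_t / P) · ((σ_max(W̄ A_LM) + Δt·L_f·σ_max(W̄ B_LM)) / (s_A − Δt·L_f·σ_max(B_LM))) · max_{n ∈ Fin N_t} ‖x(n) − w(n)‖₂. -/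
import Mathlib


noncomputable section

/-- A space-time function. -/
abbrev SpaceTime (N Nt : ℕ) := Fin Nt → EuclideanSpace ℝ (Fin N)

/-- Vectorization of a space-time function: stacks the blocks `w 0, …, w (Nt-1)`
into a single Euclidean vector of dimension `N * Nt`. -/
def vec {N Nt : ℕ} (w : SpaceTime N Nt) : EuclideanSpace ℝ (Fin Nt × Fin N) :=
  (WithLp.equiv 2 _).symm (fun p => w p.1 p.2)

/-- The largest singular value (ℓ² operator norm) of a real matrix. -/
def sigmaMax {m n : Type*} [Fintype m] [Fintype n] [DecidableEq n] (M : Matrix m n ℝ) : ℝ :=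
  ‖LinearMap.toContinuousLinearMap (Matrix.toEuclideanLin M)‖

/-- Matrix–vector multiplication as a map between Euclidean spaces. -/
def mulVecE {m n : Type*} [Fintype m] [Fintype n] [DecidableEq n] (M : Matrix m n ℝ)
    (v : EuclideanSpace ℝ n) : EuclideanSpace ℝ m :=
  Matrix.toEuclideanLin M v

/-- The stacked velocity `F̄(w)`: vectorization of `n ↦ f (w n, t n)`. -/
def Fbar {N Nt : ℕ} (f : EuclideanSpace ℝ (Fin N) × ℝ → EuclideanSpace ℝ (Fin N))
    (t : Fin Nt → ℝ) (w : SpaceTime N Nt) : EuclideanSpace ℝ (Fin Nt × Fin N) :=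
  vec (fun n => f (w n, t n))

/-- The space-time linear multistep residual `r̄(w) = A_LM vec(w) − Δt B_LM F̄(w) + b`. -/
def resid {N Nt : ℕ} (A_LM B_LM : Matrix (Fin Nt × Fin N) (Fin Nt × Fin N) ℝ)
    (b : EuclideanSpace ℝ (Fin Nt × Fin N)) (Δt : ℝ)
    (f : EuclideanSpace ℝ (Fin N) × ℝ → EuclideanSpace ℝ (Fin N))
    (t : Fin Nt → ℝ) (w : SpaceTime N Nt) : EuclideanSpace ℝ (Fin Nt × Fin N) :=
  mulVecE A_LM (vec w) - Δt • mulVecE B_LM (Fbar f t w) + b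

section Helpers

variable {N Nt : ℕ}

lemma vec_sub (u v : SpaceTime N Nt) : vec u - vec v = vec (fun n => u n - v n) := rfl

lemma norm_vec_sq (z : SpaceTime N Nt) : ‖vec z‖ ^ 2 = ∑ n, ‖z n‖ ^ 2 := by
  rw [EuclideanSpace.norm_eq, Real.sq_sqrt (by positivity)]
  rw [Fintype.sum_prod_type]
  refine Finset.sum_congr rfl fun n _ => ?_
  rw [EuclideanSpace.norm_eq, Real.sq_sqrt (by positivity)]
  rfl

lemma norm_block_le (z : SpaceTime N Nt) (n : Fin Nt) : ‖z n‖ ≤ ‖vec z‖ := by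
  have h : ‖z n‖ ^ 2 ≤ ‖vec z‖ ^ 2 := by
    rw [norm_vec_sq]
    exact Finset.single_le_sum (f := fun n => ‖z n‖ ^ 2) (fun i _ => by positivity)
      (Finset.mem_univ n)
  nlinarith [norm_nonneg (z n), norm_nonneg (vec z)]

lemma norm_vec_le (z : SpaceTime N Nt) (M : ℝ) (hM : 0 ≤ M) (h : ∀ n, ‖z n‖ ≤ M) :
    ‖vec z‖ ≤ Real.sqrt Nt * M := by
  have h2 : ‖vec z‖ ^ 2 ≤ Nt * M ^ 2 := by
    rw [norm_vec_sq]
    calc ∑ n, ‖z n‖ ^ 2 ≤ ∑ _n : Fin Nt, M ^ 2 :=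
          Finset.sum_le_sum fun n _ => pow_le_pow_left₀ (norm_nonneg _) (h n) 2
      _ = Nt * M ^ 2 := by simp [mul_comm]
  calc ‖vec z‖ = Real.sqrt (‖vec z‖ ^ 2) := (Real.sqrt_sq (norm_nonneg _)).symm
    _ ≤ Real.sqrt (Nt * M ^ 2) := Real.sqrt_le_sqrt h2
    _ = Real.sqrt Nt * M := by rw [Real.sqrt_mul (by positivity), Real.sqrt_sq hM]

lemma mulVecE_opnorm {m n : Type*} [Fintype m] [Fintype n] [DecidableEq n] (M : Matrix m n ℝ)
    (v : EuclideanSpace ℝ n) : ‖mulVecE M v‖ ≤ sigmaMax M * ‖v‖ :=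
  (LinearMap.toContinuousLinearMap (Matrix.toEuclideanLin M)).le_opNorm v

lemma sigmaMax_nonneg {m n : Type*} [Fintype m] [Fintype n] [DecidableEq n]
    (M : Matrix m n ℝ) : 0 ≤ sigmaMax M := norm_nonneg _

lemma mulVecE_mul {m n k : Type*} [Fintype m] [Fintype n] [Fintype k] [DecidableEq n]
    [DecidableEq k] (M : Matrix m n ℝ) (M' : Matrix n k ℝ) (v : EuclideanSpace ℝ k) :
    mulVecE (M * M') v = mulVecE M (mulVecE M' v) := by
  simp [mulVecE, Matrix.toEuclideanLin_apply, Matrix.mulVec_mulVec]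

end Helpers

set_option maxHeartbeats 1000000 in
/-- Theorem 5.4: a priori error bound with respect to the
ℓ∞-optimal solution. -/
theorem apriori_linf_bound {N Nt zb : ℕ} (hN : 1 ≤ N) (hNt : 1 ≤ Nt)
    (t : Fin Nt → ℝ) (Δt : ℝ) (hΔt : 0 < Δt)
    (A_LM B_LM : Matrix (Fin Nt × Fin N) (Fin Nt × Fin N) ℝ)
    (b : EuclideanSpace ℝ (Fin Nt × Fin N))
    (f : EuclideanSpace ℝ (Fin N) × ℝ → EuclideanSpace ℝ (Fin N))
    (L_f : ℝ) (hLf : 0 ≤ L_f)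
    (hlip : ∀ (u v : EuclideanSpace ℝ (Fin N)) (n : Fin Nt),
      ‖f (u, t n) - f (v, t n)‖ ≤ L_f * ‖u - v‖)
    (W : Matrix (Fin zb) (Fin Nt × Fin N) ℝ)
    (S : Set (SpaceTime N Nt))
    (x : SpaceTime N Nt) (hx : resid A_LM B_LM b Δt f t x = 0)
    (xt : SpaceTime N Nt) (hxtS : xt ∈ S)
    (hopt : ∀ w ∈ S, ‖mulVecE W (resid A_LM B_LM b Δt f t xt)‖ ≤
      ‖mulVecE W (resid A_LM B_LM b Δt f t w)‖)
    (sA : ℝ) (hsA : 0 < sA)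
    (hAlow : ∀ z : EuclideanSpace ℝ (Fin Nt × Fin N), sA * ‖z‖ ≤ ‖mulVecE A_LM z‖)
    (hdt : Δt * L_f * sigmaMax B_LM < sA)
    (P : ℝ) (hP : 0 < P)
    (hW : ∀ w ∈ S, P * ‖resid A_LM B_LM b Δt f t w‖ ≤
      ‖mulVecE W (resid A_LM B_LM b Δt f t w)‖) :
    ∀ w ∈ S, (⨆ n : Fin Nt, ‖x n - xt n‖) ≤
      (Real.sqrt Nt / P) * ((sigmaMax (W * A_LM) + Δt * L_f * sigmaMax (W * B_LM)) /
        (sA - Δt * L_f * sigmaMax B_LM)) * ⨆ n : Fin Nt, ‖x n - w n‖ := by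
  intro w hwS
  have hNe : Nonempty (Fin Nt) := ⟨⟨0, hNt⟩⟩
  set c := sA - Δt * L_f * sigmaMax B_LM with hc
  have hcpos : 0 < c := by simp only [hc]; linarith
  set C := sigmaMax (W * A_LM) + Δt * L_f * sigmaMax (W * B_LM) with hCdef
  have hCnn : 0 ≤ C := by
    have h1 := sigmaMax_nonneg (W * A_LM)
    have h2 := sigmaMax_nonneg (W * B_LM)
    have : 0 ≤ Δt * L_f := mul_nonneg hΔt.le hLf
    nlinarith
  -- Lipschitz continuity of the stacked velocity
  have hFlip : ∀ u v : SpaceTime N Nt,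
      ‖Fbar f t u - Fbar f t v‖ ≤ L_f * ‖vec u - vec v‖ := by
    intro u v
    have e1 : Fbar f t u - Fbar f t v = vec (fun n => f (u n, t n) - f (v n, t n)) :=
      vec_sub _ _
    rw [e1, vec_sub]
    have hsq : ‖vec (fun n => f (u n, t n) - f (v n, t n))‖ ^ 2 ≤
        (L_f * ‖vec (fun n => u n - v n)‖) ^ 2 := by
      rw [norm_vec_sq, mul_pow, norm_vec_sq, Finset.mul_sum]
      refine Finset.sum_le_sum fun n _ => ?_
      have := hlip (u n) (v n) n
      nlinarith [norm_nonneg (f (u n, t n) - f (v n, t n)), norm_nonneg (u n - v n)]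
    nlinarith [norm_nonneg (vec (fun n => f (u n, t n) - f (v n, t n))),
      mul_nonneg hLf (norm_nonneg (vec (fun n => u n - v n)))]
  -- residual difference formula
  have hrd : ∀ u v : SpaceTime N Nt,
      resid A_LM B_LM b Δt f t u - resid A_LM B_LM b Δt f t v =
      mulVecE A_LM (vec u - vec v) - Δt • mulVecE B_LM (Fbar f t u - Fbar f t v) := by
    intro u v
    simp only [resid, mulVecE, map_sub, smul_sub]
    abel
  -- lower bound: c * ‖vec x - vec xt‖ ≤ ‖resid xt‖
  have h1 : c * ‖vec x - vec xt‖ ≤ ‖resid A_LM B_LM b Δt f t xt‖ := by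
    have e : mulVecE A_LM (vec xt - vec x) =
        resid A_LM B_LM b Δt f t xt + Δt • mulVecE B_LM (Fbar f t xt - Fbar f t x) := by
      have := hrd xt x
      rw [hx, sub_zero] at this
      rw [this]; abel
    have hA := hAlow (vec xt - vec x)
    have hB := mulVecE_opnorm B_LM (Fbar f t xt - Fbar f t x)
    have hF := hFlip xt x
    have hupA : ‖mulVecE A_LM (vec xt - vec x)‖ ≤
        ‖resid A_LM B_LM b Δt f t xt‖ + Δt * ‖mulVecE B_LM (Fbar f t xt - Fbar f t x)‖ := by
      rw [e]
      calc ‖resid A_LM B_LM b Δt f t xt + Δt • mulVecE B_LM (Fbar f t xt - Fbar f t x)‖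
          ≤ ‖resid A_LM B_LM b Δt f t xt‖ + ‖Δt • mulVecE B_LM (Fbar f t xt - Fbar f t x)‖ :=
            norm_add_le _ _
        _ = ‖resid A_LM B_LM b Δt f t xt‖ +
            Δt * ‖mulVecE B_LM (Fbar f t xt - Fbar f t x)‖ := by
            rw [norm_smul, Real.norm_eq_abs, abs_of_pos hΔt]
    have hrev : ‖vec x - vec xt‖ = ‖vec xt - vec x‖ := norm_sub_rev _ _
    rw [hrev]
    have hBnn := sigmaMax_nonneg B_LM
    nlinarith [norm_nonneg (Fbar f t xt - Fbar f t x), norm_nonneg (vec xt - vec x),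
      mul_le_mul_of_nonneg_left hF (mul_nonneg hΔt.le hBnn),
      mul_le_mul_of_nonneg_left hB hΔt.le]
  -- upper bound: ‖W resid w‖ ≤ C * ‖vec x - vec w‖
  have h4 : ‖mulVecE W (resid A_LM B_LM b Δt f t w)‖ ≤ C * ‖vec x - vec w‖ := by
    have e : mulVecE W (resid A_LM B_LM b Δt f t w) =
        mulVecE (W * A_LM) (vec w - vec x) -
          Δt • mulVecE (W * B_LM) (Fbar f t w - Fbar f t x) := by
      have h0 : resid A_LM B_LM b Δt f t w =
          mulVecE A_LM (vec w - vec x) - Δt • mulVecE B_LM (Fbar f t w - Fbar f t x) := by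
        have := hrd w x
        rwa [hx, sub_zero] at this
      rw [h0]
      simp only [mulVecE_mul]
      simp only [mulVecE, map_sub, map_smul]
    rw [e]
    have hWA := mulVecE_opnorm (W * A_LM) (vec w - vec x)
    have hWB := mulVecE_opnorm (W * B_LM) (Fbar f t w - Fbar f t x)
    have hF := hFlip w x
    have hrev : ‖vec x - vec w‖ = ‖vec w - vec x‖ := norm_sub_rev _ _
    rw [hrev]
    calc ‖mulVecE (W * A_LM) (vec w - vec x) -
          Δt • mulVecE (W * B_LM) (Fbar f t w - Fbar f t x)‖
        ≤ ‖mulVecE (W * A_LM) (vec w - vec x)‖ +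
          ‖Δt • mulVecE (W * B_LM) (Fbar f t w - Fbar f t x)‖ := norm_sub_le _ _
      _ = ‖mulVecE (W * A_LM) (vec w - vec x)‖ +
          Δt * ‖mulVecE (W * B_LM) (Fbar f t w - Fbar f t x)‖ := by
          rw [norm_smul, Real.norm_eq_abs, abs_of_pos hΔt]
      _ ≤ C * ‖vec w - vec x‖ := by
          have hWBnn := sigmaMax_nonneg (W * B_LM)
          nlinarith [norm_nonneg (Fbar f t w - Fbar f t x), norm_nonneg (vec w - vec x),
            mul_le_mul_of_nonneg_left hF (mul_nonneg hΔt.le hWBnn),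
            mul_le_mul_of_nonneg_left hWB hΔt.le]
  have h2 := hW xt hxtS
  have h3 := hopt w hwS
  -- sup bounds
  set s := ⨆ n : Fin Nt, ‖x n - w n‖ with hs
  have hbdd : BddAbove (Set.range fun n : Fin Nt => ‖x n - w n‖) :=
    Set.Finite.bddAbove (Set.finite_range _)
  have hsle : ∀ n, ‖x n - w n‖ ≤ s := fun n => le_ciSup hbdd n
  have hs0 : 0 ≤ s := le_trans (norm_nonneg _) (hsle (Classical.arbitrary _))
  have h5 : ‖vec x - vec w‖ ≤ Real.sqrt Nt * s := by
    rw [vec_sub]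
    exact norm_vec_le _ s hs0 hsle
  have h6 : (⨆ n : Fin Nt, ‖x n - xt n‖) ≤ ‖vec x - vec xt‖ := by
    refine ciSup_le fun n => ?_
    have := norm_block_le (fun m => x m - xt m) n
    rwa [← vec_sub] at this
  -- combine
  have key : (⨆ n : Fin Nt, ‖x n - xt n‖) * (c * P) ≤ C * (Real.sqrt Nt * s) := by
    have hcP : 0 < c * P := mul_pos hcpos hP
    calc (⨆ n : Fin Nt, ‖x n - xt n‖) * (c * P)
        ≤ ‖vec x - vec xt‖ * (c * P) := mul_le_mul_of_nonneg_right h6 hcP.le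
      _ = P * (c * ‖vec x - vec xt‖) := by ring
      _ ≤ P * ‖resid A_LM B_LM b Δt f t xt‖ := mul_le_mul_of_nonneg_left h1 hP.le
      _ ≤ ‖mulVecE W (resid A_LM B_LM b Δt f t xt)‖ := h2
      _ ≤ ‖mulVecE W (resid A_LM B_LM b Δt f t w)‖ := h3
      _ ≤ C * ‖vec x - vec w‖ := h4
      _ ≤ C * (Real.sqrt Nt * s) := mul_le_mul_of_nonneg_left h5 hCnn
  have hrhs : (Real.sqrt Nt / P) * (C / c) * s = C * (Real.sqrt Nt * s) / (c * P) := by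
    field_simp
  rw [hrhs]
  rw [le_div_iff₀ (mul_pos hcpos hP)]
  exact key
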